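/- Let R be a commutative ring, L a Lie algebra over R, n ≥ 1, and Φ : (Fin n → L) → R an R-multilinear invariant tensor on L (for every x ∈ L and v : Fin n → L, ∑_{p} Φ (Function.update v p ⁅x, v p⁆) = 0). Let S be a commutative semigroup with an absorbing element z (z * s = z for all s ∈ S), and let f : S → R satisfy f z = 0. Define Ψ : (Fin n → Finsupp S L) → R by Ψ g = ∑_{s} f (s 0 * ⋯ * s (n-1)) * Φ (fun i => (g i) (s i)), the sum ranging over tuples s : Fin n → S with s i in the support of g i. Let ⁅·,·⁆' be the unique R-bilinear bracket on Finsupp S L with ⁅Finsupp.single s x, Finsupp.single t y⁆' = 0 if s * t = z and ⁅Finsupp.single s x, Finsupp.single t y⁆' = Finsupp.single (s * t) ⁅x, y⁆ otherwise (the 0_S-reduced bracket). Then Ψ is an invariant tensor for the 0_S-reduced algebra: for every w ∈ Finsupp S L and every g : Fin n → Finsupp S L, ∑_{p : Fin n} Ψ (Function.update g p ⁅w, g p⁆') = 0. -/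

import Mathlib

/-- The ordered product `s 0 * s 1 * ⋯ * s n` of a tuple of `n+1` elements of
a semigroup (which need not have an identity). -/
def finSemigroupProd {S : Type*} [Mul S] {n : ℕ} (s : Fin (n + 1) → S) : S :=
  (List.ofFn fun i : Fin n => s i.succ).foldl (· * ·) (s 0)

/-!
`Ψ` is the multilinear extension to `S →₀ L` of the tensor `f (s 0 * ⋯ * s n) • Φ y` on the
generators `fun i => single (s i) (y i)`. The invariance sum is linear in `w` and multilinear in
`g`, so it suffices to check that it vanishes on generators. There, bracketing the `p`-th slot with
`w = single u x` replaces `s p` by `u * s p` and `y p` by `⁅x, y p⁆`, so every term of the sum over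
`p` carries the same coefficient `f (u * ∏ s)`: the terms killed by the reduction (`u * s p = z`)
are no exception, since then `u * ∏ s = z` and `f z = 0`. What remains is `f (u * ∏ s)` times the
invariance sum of `Φ`, which vanishes.
-/

open Function Finset

section finSemigroupProd

variable {S : Type*}

theorem WithOne.coe_foldl_mul [Semigroup S] (l : List S) (a : S) :
    ((l.foldl (· * ·) a : S) : WithOne S) = a * (l.map ((↑) : S → WithOne S)).prod := by
  induction l generalizing a with
  | nil => simp
  | cons b l ih => simp only [List.foldl_cons, List.map_cons, List.prod_cons, ih, WithOne.coe_mul,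
      mul_assoc]

variable [CommSemigroup S] {n : ℕ}

theorem coe_finSemigroupProd (s : Fin (n + 1) → S) :
    ((finSemigroupProd s : S) : WithOne S) = ∏ i, (s i : WithOne S) := by
  rw [finSemigroupProd, WithOne.coe_foldl_mul, List.map_ofFn, Fin.prod_univ_succ]
  simp [List.prod_ofFn, Function.comp_def]

theorem finSemigroupProd_update_mul (s : Fin (n + 1) → S) (p : Fin (n + 1)) (u : S) :
    finSemigroupProd (update s p (u * s p)) = u * finSemigroupProd s := by
  have hcoe : (fun i => ((update s p (u * s p) i : S) : WithOne S))
      = update (fun i => (s i : WithOne S)) p ↑(u * s p) :=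
    funext fun i => apply_update (fun _ (t : S) => (t : WithOne S)) s p (u * s p) i
  rw [← WithOne.coe_inj, WithOne.coe_mul, coe_finSemigroupProd, coe_finSemigroupProd, hcoe,
    Fintype.prod_eq_mul_prod_compl p, Fintype.prod_eq_mul_prod_compl p (fun i => (s i : WithOne S)),
    update_self, WithOne.coe_mul, mul_assoc]
  congr 2
  exact prod_congr rfl fun i hi => update_of_ne (notMem_singleton.mp (mem_compl.mp hi)) _ _

theorem mul_finSemigroupProd_eq_of_mul_eq {z : S} (hz : ∀ t, z * t = z) {s : Fin (n + 1) → S}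
    {p : Fin (n + 1)} {u : S} (h : u * s p = z) : u * finSemigroupProd s = z :=
  calc u * finSemigroupProd s = finSemigroupProd (update s p (u * s p)) :=
        (finSemigroupProd_update_mul s p u).symm
    _ = finSemigroupProd (update s p (z * s p)) := by rw [h, hz]
    _ = z := by rw [finSemigroupProd_update_mul, hz]

end finSemigroupProd

namespace MultilinearMap

variable {R ι S M N : Type*} [CommSemiring R] [Fintype ι] [DecidableEq ι]
  [AddCommMonoid M] [Module R M] [AddCommMonoid N] [Module R N]

@[ext]
theorem finsupp_ext ⦃f g : MultilinearMap R (fun _ : ι => S →₀ M) N⦄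
    (h : ∀ (s : ι → S) (y : ι → M),
      f (fun i => Finsupp.single (s i) (y i)) = g (fun i => Finsupp.single (s i) (y i))) :
    f = g := by
  ext x
  rw [funext fun i => ((x i).sum_single).symm]
  simp only [Finsupp.sum, map_sum_finset]
  exact sum_congr rfl fun s _ => h s _

omit [Fintype ι] in
theorem compLinearMap_update_id_apply (Ψ : MultilinearMap R (fun _ : ι => M) N) (p : ι)
    (T : M →ₗ[R] M) (g : ι → M) :
    Ψ.compLinearMap (update (fun _ => LinearMap.id) p T) g = Ψ (update g p (T (g p))) := by
  rw [compLinearMap_apply]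
  congr 1
  funext i
  rcases eq_or_ne i p with rfl | hi <;> simp [*]

variable (Φ : MultilinearMap R (fun _ : ι => M) N) (F : (ι → S) → R)

theorem sum_piFinset_support_eq_of_subset (g : ι → S →₀ M) {A : ι → Finset S}
    (hA : ∀ i, (g i).support ⊆ A i) :
    ∑ s ∈ Fintype.piFinset (fun i => (g i).support), F s • Φ (fun i => g i (s i))
      = ∑ s ∈ Fintype.piFinset A, F s • Φ (fun i => g i (s i)) := by
  refine sum_subset (Fintype.piFinset_subset _ _ hA) fun s _ hs => ?_
  obtain ⟨i, hi⟩ : ∃ i, s i ∉ (g i).support := by simpa [Fintype.mem_piFinset] using hs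
  rw [Φ.map_coord_zero (m := fun i => g i (s i)) i (Finsupp.notMem_support_iff.mp hi), smul_zero]

omit [Fintype ι] in
theorem _root_.Finsupp.support_update_subset_union [DecidableEq S] (g : ι → S →₀ M) (p : ι)
    {h : S →₀ M} {X : Finset S} (hX : h.support ⊆ X) (i : ι) :
    (update g p h i).support ⊆ (g i).support ∪ X := by
  rcases eq_or_ne i p with rfl | hi
  · simpa using hX.trans subset_union_right
  · simp [update_of_ne hi]

noncomputable def finsuppExpand : MultilinearMap R (fun _ : ι => S →₀ M) N :=
  MultilinearMap.mk'
    (fun g => ∑ s ∈ Fintype.piFinset (fun i => (g i).support), F s • Φ (fun i => g i (s i)))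
    (fun g p a b => by
      classical
      have hA {h : S →₀ M} (hh : h.support ⊆ a.support ∪ b.support) :=
        Finsupp.support_update_subset_union g p hh
      rw [sum_piFinset_support_eq_of_subset Φ F _ (hA Finsupp.support_add),
        sum_piFinset_support_eq_of_subset Φ F _ (hA subset_union_left),
        sum_piFinset_support_eq_of_subset Φ F _ (hA subset_union_right), ← sum_add_distrib]
      refine sum_congr rfl fun s _ => ?_
      simp only [apply_update (fun i (h : S →₀ M) => h (s i)), Finsupp.add_apply,
        Φ.map_update_add, smul_add])
    (fun g p c b => by
      classical
      have hA {h : S →₀ M} (hh : h.support ⊆ b.support) :=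
        Finsupp.support_update_subset_union g p hh
      rw [sum_piFinset_support_eq_of_subset Φ F _ (hA Finsupp.support_smul),
        sum_piFinset_support_eq_of_subset Φ F _ (hA subset_rfl), smul_sum]
      refine sum_congr rfl fun s _ => ?_
      simp only [apply_update (fun i (h : S →₀ M) => h (s i)), Finsupp.smul_apply,
        Φ.map_update_smul, smul_comm c])

theorem finsuppExpand_apply_of_support_subset (g : ι → S →₀ M) {A : ι → Finset S}
    (hA : ∀ i, (g i).support ⊆ A i) :
    finsuppExpand Φ F g = ∑ s ∈ Fintype.piFinset A, F s • Φ (fun i => g i (s i)) :=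
  sum_piFinset_support_eq_of_subset Φ F g hA

theorem finsuppExpand_single (s : ι → S) (y : ι → M) :
    finsuppExpand Φ F (fun i => Finsupp.single (s i) (y i)) = F s • Φ y := by
  rw [finsuppExpand_apply_of_support_subset Φ F _ (A := fun i => {s i})
    fun i => Finsupp.support_single_subset, Fintype.piFinset_singleton, sum_singleton]
  simp only [Finsupp.single_eq_same]

end MultilinearMap

theorem MultilinearMap.finsuppExpand_update_reducedBracket_single {R S L N : Type*} [CommSemiring R]
    [CommSemigroup S] [DecidableEq S] [AddCommMonoid L] [Module R L] [Bracket L L]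
    [AddCommMonoid N] [Module R N] {n : ℕ} (Φ : MultilinearMap R (fun _ : Fin (n + 1) => L) N)
    {z : S} (hz : ∀ s : S, z * s = z) {f : S → R} (hf : f z = 0)
    {B' : (S →₀ L) →ₗ[R] (S →₀ L) →ₗ[R] (S →₀ L)}
    (hB' : ∀ (s t : S) (x y : L), B' (Finsupp.single s x) (Finsupp.single t y)
      = if s * t = z then 0 else Finsupp.single (s * t) ⁅x, y⁆)
    (u : S) (x : L) (s : Fin (n + 1) → S) (y : Fin (n + 1) → L) (p : Fin (n + 1)) :
    finsuppExpand Φ (fun s => f (finSemigroupProd s))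
        (update (fun i => Finsupp.single (s i) (y i)) p
          (B' (Finsupp.single u x) (Finsupp.single (s p) (y p))))
      = f (u * finSemigroupProd s) • Φ (update y p ⁅x, y p⁆) := by
  rw [hB']
  split_ifs with hzero
  · rw [map_update_zero, mul_finSemigroupProd_eq_of_mul_eq hz hzero, hf, zero_smul]
  · have hsingle :
        update (fun i => Finsupp.single (s i) (y i)) p (Finsupp.single (u * s p) ⁅x, y p⁆)
          = fun i => Finsupp.single (update s p (u * s p) i) (update y p ⁅x, y p⁆ i) :=
      funext fun i => (apply_update₂ (fun _ => Finsupp.single) s y p (u * s p) ⁅x, y p⁆ i).symm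
    rw [hsingle, finsuppExpand_single, finSemigroupProd_update_mul]

/-- **Invariant tensors for `0_S`-reduced algebras** (Theorem 5 of the paper).
Let `Φ` be an `R`-multilinear invariant tensor of rank `n+1 ≥ 1` on a Lie
algebra `L`, let `z` be an absorbing element of the commutative semigroup `S`,
let `f : S → R` satisfy `f z = 0`, and define
`Ψ g = ∑_{s, s i ∈ (g i).support} f (s 0 * ⋯ * s n) * Φ (fun i => g i (s i))`.
Let `B'` be the `0_S`-reduced bracket on `S →₀ L`, i.e. the `R`-bilinear map
with `B' (single s x) (single t y) = 0` if `s * t = z` and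
`= single (s * t) ⁅x, y⁆` otherwise.  Then `Ψ` is an invariant tensor for the
`0_S`-reduced algebra. -/
theorem zeroReduced_invariant_tensor
    (R : Type*) [CommRing R] (L : Type*) [LieRing L] [LieAlgebra R L]
    (S : Type*) [CommSemigroup S] [DecidableEq S]
    (n : ℕ)
    (Φ : MultilinearMap R (fun _ : Fin (n + 1) => L) R)
    (hΦ : ∀ (x : L) (v : Fin (n + 1) → L),
      ∑ p : Fin (n + 1), Φ (Function.update v p ⁅x, v p⁆) = 0)
    (z : S) (hz : ∀ s : S, z * s = z)
    (f : S → R) (hf : f z = 0)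
    (B' : (S →₀ L) →ₗ[R] (S →₀ L) →ₗ[R] (S →₀ L))
    (hB' : ∀ (s t : S) (x y : L),
      B' (Finsupp.single s x) (Finsupp.single t y)
        = if s * t = z then 0 else Finsupp.single (s * t) ⁅x, y⁆)
    (Ψ : (Fin (n + 1) → (S →₀ L)) → R)
    (hΨ : ∀ g : Fin (n + 1) → (S →₀ L),
      Ψ g = ∑ s ∈ Fintype.piFinset (fun i => (g i).support),
        f (finSemigroupProd s) * Φ (fun i => (g i) (s i))) :
    ∀ (w : S →₀ L) (g : Fin (n + 1) → (S →₀ L)),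
      ∑ p : Fin (n + 1), Ψ (Function.update g p (B' w (g p))) = 0 := by
  -- `hΨ g` is the defining formula of `finsuppExpand`, read with `•` on `R` as `*`.
  obtain rfl : Ψ = MultilinearMap.finsuppExpand Φ (fun s => f (finSemigroupProd s)) := funext hΨ
  intro w g
  induction w using Finsupp.induction_linear with
  | zero => simp only [map_zero, LinearMap.zero_apply, MultilinearMap.map_update_zero,
      sum_const_zero]
  | add w₁ w₂ h₁ h₂ =>
    simp only [map_add, LinearMap.add_apply, MultilinearMap.map_update_add, sum_add_distrib, h₁,
      h₂, add_zero]
  | single u x =>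
    have hvanish : ∑ p,
        (MultilinearMap.finsuppExpand Φ fun s => f (finSemigroupProd s)).compLinearMap
          (update (fun _ => LinearMap.id) p (B' (Finsupp.single u x))) = 0 := by
      ext s y
      simp only [_root_.sum_apply, MultilinearMap.compLinearMap_update_id_apply,
        MultilinearMap.finsuppExpand_update_reducedBracket_single Φ hz hf hB', ← smul_sum, hΦ,
        smul_zero, zero_apply]
    simpa only [_root_.sum_apply, MultilinearMap.compLinearMap_update_id_apply, zero_apply]
      using congr($hvanish g)
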